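/- arXiv:1612.00105 — 10 statements merged into one kernel-verified Lean document; each statement's English description precedes it below -/
import Mathlib

section
/- Let R be a commutative ring, g ∈ M₂(R), T = Tr(g) and D = det(g). Then the characteristic polynomial of the induced endomorphism Sym³(g) of Sym³(R²) is X⁴ − (T³−2TD)·X³ + D·(T⁴−3DT²+2D²)·X² − D³·(T³−2TD)·X + D⁶. -/
open Matrix Polynomial
set_option maxHeartbeats 4000000
theorem my_det_fin_four {S : Type*} [CommRing S] (A : Matrix (Fin 4) (Fin 4) S) :
    A.det =
      A 0 0 * (A 1 1 * (A 2 2 * A 3 3 - A 2 3 * A 3 2) - A 1 2 * (A 2 1 * A 3 3 - A 2 3 * A 3 1)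
        + A 1 3 * (A 2 1 * A 3 2 - A 2 2 * A 3 1))
      - A 0 1 * (A 1 0 * (A 2 2 * A 3 3 - A 2 3 * A 3 2) - A 1 2 * (A 2 0 * A 3 3 - A 2 3 * A 3 0)
        + A 1 3 * (A 2 0 * A 3 2 - A 2 2 * A 3 0))
      + A 0 2 * (A 1 0 * (A 2 1 * A 3 3 - A 2 3 * A 3 1) - A 1 1 * (A 2 0 * A 3 3 - A 2 3 * A 3 0)
        + A 1 3 * (A 2 0 * A 3 1 - A 2 1 * A 3 0))
      - A 0 3 * (A 1 0 * (A 2 1 * A 3 2 - A 2 2 * A 3 1) - A 1 1 * (A 2 0 * A 3 2 - A 2 2 * A 3 0)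
        + A 1 2 * (A 2 0 * A 3 1 - A 2 1 * A 3 0)) := by
  rw [Matrix.det_succ_row_zero, Fin.sum_univ_four]
  simp [Matrix.det_fin_three, Matrix.submatrix_apply, Fin.succAbove, Fin.lt_def, show (Fin.succ 2 : Fin 4) = 3 from rfl, show ((3:Fin 4):ℕ)=3 from rfl, show ((2:Fin 4):ℕ)=2 from rfl, show ((1:Fin 4):ℕ)=1 from rfl, show (Fin.castSucc 2 : Fin 4) = 2 from rfl, show (Fin.castSucc 1 : Fin 4) = 1 from rfl, show (Fin.castSucc 0 : Fin 4) = 0 from rfl]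
  ring


/-- The matrix of the endomorphism induced by a 2×2 matrix `g` on the third symmetric power
`Sym³(R²)`, written in the monomial basis `(e₁³, e₁²e₂, e₁e₂², e₂³)`. -/
def sym3 {R : Type*} [CommRing R] (g : Matrix (Fin 2) (Fin 2) R) :
    Matrix (Fin 4) (Fin 4) R :=
  !![g 0 0 ^ 3, g 0 0 ^ 2 * g 0 1, g 0 0 * g 0 1 ^ 2, g 0 1 ^ 3;
     3 * g 0 0 ^ 2 * g 1 0, g 0 0 ^ 2 * g 1 1 + 2 * g 0 0 * g 0 1 * g 1 0,
       2 * g 0 0 * g 0 1 * g 1 1 + g 0 1 ^ 2 * g 1 0, 3 * g 0 1 ^ 2 * g 1 1;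
     3 * g 0 0 * g 1 0 ^ 2, 2 * g 0 0 * g 1 0 * g 1 1 + g 0 1 * g 1 0 ^ 2,
       g 0 0 * g 1 1 ^ 2 + 2 * g 0 1 * g 1 0 * g 1 1, 3 * g 0 1 * g 1 1 ^ 2;
     g 1 0 ^ 3, g 1 0 ^ 2 * g 1 1, g 1 0 * g 1 1 ^ 2, g 1 1 ^ 3]

/-- The characteristic polynomial of `Sym³(g)` for a 2×2 matrix `g` with trace `T` and
determinant `D` is `X⁴ − (T³−2TD)X³ + D(T⁴−3DT²+2D²)X² − D³(T³−2TD)X + D⁶`. -/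
theorem charpoly_sym3 {R : Type*} [CommRing R] (g : Matrix (Fin 2) (Fin 2) R) :
    (sym3 g).charpoly =
      X ^ 4 - C (g.trace ^ 3 - 2 * g.trace * g.det) * X ^ 3
        + C (g.det * (g.trace ^ 4 - 3 * g.det * g.trace ^ 2 + 2 * g.det ^ 2)) * X ^ 2
        - C (g.det ^ 3 * (g.trace ^ 3 - 2 * g.trace * g.det)) * X
        + C (g.det ^ 6) := by
  rw [Matrix.charpoly, my_det_fin_four]
  simp [charmatrix_apply, sym3, Matrix.one_apply, scalar_apply, Matrix.diagonal_apply,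
    Matrix.trace_fin_two, Matrix.det_fin_two, Fin.ext_iff, show ((3:Fin 4):ℕ)=3 from rfl, show ((2:Fin 4):ℕ)=2 from rfl, show ((1:Fin 4):ℕ)=1 from rfl, show ((0:Fin 4):ℕ)=0 from rfl]
  push_cast [_root_.map_mul, map_add, map_pow, map_sub, map_ofNat]
  ring
end

section
/- Let R be a commutative ring and let J be the 4×4 antidiagonal matrix with antidiagonal entries (3, −1, 1, −3) (reading J₁₄ = 3, J₂₃ = −1, J₃₂ = 1, J₄₁ = −3). For every g ∈ GL₂(R), the matrix S = Sym³(g) of the induced map on Sym³(R²) in the basis (e₁³, e₁²e₂, e₁e₂², e₂³) satisfies ᵗS · J · S = det(g)³ · J. In particular, if 3 is invertible in R, Sym³ defines a group homomorphism GL₂(R) → GSp₄(R) with similitude factor det(g)³, where GSp₄ is taken with respect to the alternating form J. -/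
open Matrix

set_option maxHeartbeats 4000000

/-- The 4×4 antidiagonal alternating form with antidiagonal entries `(3, −1, 1, −3)`. -/
def Jsym3 (R : Type*) [CommRing R] : Matrix (Fin 4) (Fin 4) R :=
  !![0, 0, 0, 3; 0, 0, -1, 0; 0, 1, 0, 0; -3, 0, 0, 0]

/-- For any `g ∈ GL₂(R)`, the matrix `S = Sym³(g)` satisfies `ᵗS·J·S = det(g)³·J`; moreover
`Sym³` is multiplicative and sends `1` to `1`, so that (when `3` is invertible in `R`,
making `J` a symplectic form) it defines a group homomorphism `GL₂(R) → GSp₄(R)` with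
similitude factor `det(g)³`. -/
theorem sym3_symplectic {R : Type*} [CommRing R] :
    (∀ g : GL (Fin 2) R,
        (sym3 (g : Matrix (Fin 2) (Fin 2) R))ᵀ * Jsym3 R * sym3 (g : Matrix (Fin 2) (Fin 2) R)
          = ((g : Matrix (Fin 2) (Fin 2) R).det) ^ 3 • Jsym3 R) ∧
      (∀ A B : Matrix (Fin 2) (Fin 2) R, sym3 (A * B) = sym3 A * sym3 B) ∧
      sym3 (1 : Matrix (Fin 2) (Fin 2) R) = 1 := by
  refine ⟨?_, ?_, ?_⟩
  · intro g
    ext i j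
    fin_cases i <;> fin_cases j <;>
      simp [sym3, Jsym3, Matrix.mul_apply, Matrix.det_fin_two, Fin.sum_univ_four,
        Matrix.vecHead, Matrix.vecTail, Matrix.transpose_apply] <;> ring
  · intro A B
    ext i j
    fin_cases i <;> fin_cases j <;>
      simp [sym3, Matrix.mul_apply, Fin.sum_univ_four, Fin.sum_univ_two,
        Matrix.vecHead, Matrix.vecTail] <;> ring
  · ext i j
    fin_cases i <;> fin_cases j <;>
      simp [sym3, Matrix.one_apply, Matrix.vecHead, Matrix.vecTail]
end

section
/- Let F be a field. The kernel of the group homomorphism Sym³ : GL₂(F) → GL₄(F) is exactly the set of scalar matrices ζ·1₂ with ζ ∈ F and ζ³ = 1. -/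
open Matrix

/-- The kernel of `Sym³ : GL₂(F) → GL₄(F)` consists exactly of the scalar matrices `ζ·1₂`
with `ζ³ = 1`. -/
theorem sym3_kernel {F : Type*} [Field F] (g : GL (Fin 2) F) :
    sym3 (g : Matrix (Fin 2) (Fin 2) F) = 1 ↔
      ∃ ζ : F, ζ ^ 3 = 1 ∧ (g : Matrix (Fin 2) (Fin 2) F) = ζ • (1 : Matrix (Fin 2) (Fin 2) F) := by
  set M := (g : Matrix (Fin 2) (Fin 2) F)
  constructor
  · intro h
    have h03 : M 0 1 ^ 3 = 0 := by
      have := congrFun (congrFun h 0) 3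
      simpa [sym3, Matrix.one_apply] using this
    have hb : M 0 1 = 0 := by
      exact pow_eq_zero_iff (by norm_num) |>.mp h03
    have h30 : M 1 0 ^ 3 = 0 := by
      have := congrFun (congrFun h 3) 0
      simpa [sym3, Matrix.one_apply] using this
    have hc : M 1 0 = 0 := pow_eq_zero_iff (by norm_num) |>.mp h30
    have h00 : M 0 0 ^ 3 = 1 := by
      have := congrFun (congrFun h 0) 0
      simpa [sym3, Matrix.one_apply] using this
    have h11 : M 0 0 ^ 2 * M 1 1 = 1 := by
      have := congrFun (congrFun h 1) 1
      simpa [sym3, hb, hc, Matrix.one_apply] using this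
    have hd : M 1 1 = M 0 0 := by
      have := congrArg (· * M 0 0) h11
      simp only [one_mul] at this
      calc M 1 1 = (M 0 0 ^ 3) * M 1 1 := by rw [h00]; ring
        _ = M 0 0 * (M 0 0 ^ 2 * M 1 1) := by ring
        _ = M 0 0 := by rw [h11, mul_one]
    refine ⟨M 0 0, h00, ?_⟩
    ext i j
    fin_cases i <;> fin_cases j <;>
      simp [hb, hc, hd, Matrix.one_apply]
  · rintro ⟨ζ, hζ, hM⟩
    have e : ∀ i j, M i j = if i = j then ζ else 0 := by
      intro i j; rw [hM]; simp [Matrix.one_apply, mul_ite]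
    ext i j
    fin_cases i <;> fin_cases j <;>
      simp [sym3, e, Matrix.one_apply, hζ, Matrix.vecHead, Matrix.vecTail] <;> ring_nf <;> simp [hζ]
end

section
/- Let A ⊆ B be an extension of Noetherian integral domains such that B is finitely generated as an A-module. Call an A-lattice in B any A-submodule of B of the form Σᵢ A·bᵢ, where b₁,…,b_d ∈ B form a basis of Frac(B) as a Frac(A)-vector space. Then: (1) every A-lattice in B contains a non-zero ideal of B; (2) conversely, every non-zero ideal of B contains an A-lattice in B. -/
/-!
Both inclusions are obtained by clearing denominators. If `b` is a lattice basis, the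
coordinates of finitely many `A`-module generators of `B` have a common denominator `a ≠ 0`
in `A`, so the ideal `a B` lies in the lattice. Conversely, since `B` is integral over `A`,
`Frac B` is the localization of `B` at the non-zero elements of `A`; hence any `Frac A`-basis
of `Frac B` can be rescaled by one such element into `B`, and then by any non-zero `y ∈ I`
into `I`.
-/

open scoped nonZeroDivisors

section

variable {A B K L : Type*} [CommRing A] [IsDomain A] [CommRing B] [Algebra A B]
  [Field K] [Field L] [Algebra A K] [IsFractionRing A K] [Algebra B L] [Algebra A L] [Algebra K L]
  [IsScalarTower A B L] [IsScalarTower A K L]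

theorem smul_mem_span_of_isInteger_repr {ι : Type*} {b : ι → B} {v : Module.Basis ι K L}
    (hv : ∀ i, v i = algebraMap B L (b i)) (hBL : Function.Injective (algebraMap B L))
    {a : A} {z : B} (ha : ∀ i, IsLocalization.IsInteger A (a • v.repr (algebraMap B L z) i)) :
    a • z ∈ Submodule.span A (Set.range b) := by
  set f := (IsScalarTower.toAlgHom A B L).toLinearMap
  have hv' : Set.range v = f '' Set.range b := by
    rw [← Set.range_comp]; exact congrArg Set.range (funext hv)
  have hmem : f (a • z) ∈ Submodule.span A (Set.range v) := by
    rw [v.mem_span_iff_repr_mem A]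
    intro i
    rw [map_smul, LinearMapClass.map_smul_of_tower v.repr, Finsupp.smul_apply]
    exact ha i
  rw [hv', ← Submodule.map_span] at hmem
  obtain ⟨w, hw, hwz⟩ := hmem
  rwa [← hBL hwz]

variable (A) in
theorem exists_smul_mem_span_of_basis [Module.Finite A B] {ι : Type*} [Finite ι] {b : ι → B}
    {v : Module.Basis ι K L} (hv : ∀ i, v i = algebraMap B L (b i))
    (hBL : Function.Injective (algebraMap B L)) :
    ∃ a ∈ A⁰, ∀ z : B, a • z ∈ Submodule.span A (Set.range b) := by
  obtain ⟨n, x, hx⟩ := Module.Finite.exists_fin (R := A) (M := B)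
  obtain ⟨⟨a, ha⟩, hint⟩ := IsLocalization.exist_integer_multiples_of_finite A⁰
    (fun p : Fin n × ι => v.repr (algebraMap B L (x p.1)) p.2)
  refine ⟨a, ha, fun z => ?_⟩
  have hspan : Submodule.span A (Set.range x) ≤
      (Submodule.span A (Set.range b)).comap (a • LinearMap.id) := by
    rw [Submodule.span_le]
    rintro _ ⟨j, rfl⟩
    exact smul_mem_span_of_isInteger_repr hv hBL fun i => hint (j, i)
  exact hspan (hx ▸ Submodule.mem_top : z ∈ _)

end

theorem exists_basis_eq_algebraMap_mul (A K : Type*) {B L : Type*} [CommRing A] [CommRing B]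
    [Algebra A B] [Field K] [Field L] [Algebra B L] [Algebra K L]
    [IsLocalization (Algebra.algebraMapSubmonoid B A⁰) L] [Module.Finite K L] {y : B}
    (hy : algebraMap B L y ≠ 0) :
    ∃ (d : ℕ) (b : Fin d → B) (v : Module.Basis (Fin d) K L),
      ∀ i, v i = algebraMap B L (y * b i) := by
  set w := Module.finBasis K L
  obtain ⟨⟨m, hm⟩, hint⟩ :=
    IsLocalization.exist_integer_multiples_of_finite (Algebra.algebraMapSubmonoid B A⁰) w
  choose b hb using hint
  have hm0 : algebraMap B L m ≠ 0 :=
    (IsLocalization.map_units L (⟨m, hm⟩ : Algebra.algebraMapSubmonoid B A⁰)).ne_zero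
  let c : Lˣ := Units.mk0 (algebraMap B L (y * m)) (by rw [map_mul]; exact mul_ne_zero hy hm0)
  refine ⟨_, b, w.map (c.mulLeftLinearEquiv K L), fun i => ?_⟩
  simp [c, hb, Algebra.smul_def]

theorem lattice_ideal_general {A B : Type*} [CommRing A] [CommRing B] [IsDomain A] [IsDomain B]
    [Algebra A B]
    (hinj : Function.Injective (algebraMap A B)) [Module.Finite A B]
    (K L : Type*) [Field K] [Field L] [Algebra A K] [IsFractionRing A K]
    [Algebra B L] [IsFractionRing B L] [Algebra A L] [Algebra K L]
    [IsScalarTower A B L] [IsScalarTower A K L] :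
    (∀ (d : ℕ) (b : Fin d → B) (v : Module.Basis (Fin d) K L),
        (∀ i, v i = algebraMap B L (b i)) →
        ∃ I : Ideal B, I ≠ ⊥ ∧ (I : Set B) ⊆ (Submodule.span A (Set.range b) : Set B)) ∧
      ∀ I : Ideal B, I ≠ ⊥ →
        ∃ (d : ℕ) (b : Fin d → B) (v : Module.Basis (Fin d) K L),
          (∀ i, v i = algebraMap B L (b i)) ∧
          (Submodule.span A (Set.range b) : Set B) ⊆ (I : Set B) := by
  have hBL : Function.Injective (algebraMap B L) := IsFractionRing.injective B L
  constructor
  · intro d b v hv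
    obtain ⟨a, ha, hab⟩ := exists_smul_mem_span_of_basis A hv hBL
    refine ⟨Ideal.span {algebraMap A B a}, ?_, fun z hz => ?_⟩
    · simpa using map_ne_zero_of_mem_nonZeroDivisors _ hinj ha
    · obtain ⟨u, rfl⟩ := Ideal.mem_span_singleton'.mp hz
      simpa [Algebra.smul_def, mul_comm] using hab u
  · intro I hI
    have : FaithfulSMul A B := (faithfulSMul_iff_algebraMap_injective A B).mpr hinj
    have : Module.Finite K L := .of_isLocalization A B A⁰
    obtain ⟨y, hyI, hy⟩ := Submodule.exists_mem_ne_zero_of_ne_bot hI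
    obtain ⟨d, b, v, hv⟩ :=
      exists_basis_eq_algebraMap_mul A K ((map_ne_zero_iff _ hBL).mpr hy)
    refine ⟨d, fun i => y * b i, v, hv, ?_⟩
    refine (Submodule.span_le (p := I.restrictScalars A)).mpr ?_
    rintro _ ⟨i, rfl⟩
    exact I.mul_mem_right _ hyI

/-- Let `A ⊆ B` be an extension of Noetherian integral domains with `B` module-finite over
`A`, and let `K`, `L` be the fraction fields of `A` and `B` respectively. An `A`-lattice in
`B` is the `A`-span of elements `b₁, …, b_d ∈ B` whose images form a `K`-basis of `L`.
Then (1) every `A`-lattice in `B` contains a non-zero ideal of `B`, and (2) every non-zero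
ideal of `B` contains an `A`-lattice in `B`. -/
theorem lattice_ideal {A B : Type*} [CommRing A] [CommRing B] [IsDomain A] [IsDomain B]
    [IsNoetherianRing A] [IsNoetherianRing B] [Algebra A B]
    (hinj : Function.Injective (algebraMap A B)) [Module.Finite A B]
    (K L : Type*) [Field K] [Field L] [Algebra A K] [IsFractionRing A K]
    [Algebra B L] [IsFractionRing B L] [Algebra A L] [Algebra K L]
    [IsScalarTower A B L] [IsScalarTower A K L] :
    (∀ (d : ℕ) (b : Fin d → B) (v : Module.Basis (Fin d) K L),
        (∀ i, v i = algebraMap B L (b i)) →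
        ∃ I : Ideal B, I ≠ ⊥ ∧ (I : Set B) ⊆ (Submodule.span A (Set.range b) : Set B)) ∧
      ∀ I : Ideal B, I ≠ ⊥ →
        ∃ (d : ℕ) (b : Fin d → B) (v : Module.Basis (Fin d) K L),
          (∀ i, v i = algebraMap B L (b i)) ∧
          (Submodule.span A (Set.range b) : Set B) ⊆ (I : Set B) :=
  lattice_ideal_general hinj K L
end

section
/- Let k ≥ 2 and let G₁, …, G_k be profinite groups such that, for each i, every open subgroup K of Gᵢ has the property that the closure of the commutator subgroup of K is open in Gᵢ. Let G₀ be a closed subgroup of G₁ × ⋯ × G_k. Suppose that for all 1 ≤ i < j ≤ k, the image of G₀ under the projection to Gᵢ × Gⱼ is an open subgroup of Gᵢ × Gⱼ. Then G₀ is an open subgroup of G₁ × ⋯ × G_k. -/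
/-! For `S ⊆ ι` and `j ∉ S`, let `N_S(j) = G₀.coordSlice S j ≤ G_j` consist of the `j`-th
coordinates of elements of `G₀` trivial on `S`. By compactness these are closed subgroups;
`N_{i}(j)` is open because the image of `G₀` in `G_i × G_j` is open; and
`⁅N_S(j), N_T(j)⁆ ≤ N_{S ∪ T}(j)`. As the closure of the commutator subgroup of an open subgroup
is open, induction on `S` shows that every `N_S(j)` is open. For `S = ι ∖ {j}` the product of the
`N_S(j)` is an open subgroup contained in `G₀`. -/

open scoped commutatorElement

theorem Subgroup.isOpen_of_commutator_le {G : Type*} [Group G] [TopologicalSpace G]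
    [IsTopologicalGroup G]
    (hcomm : ∀ K : Subgroup G, IsOpen (K : Set G) → IsOpen (⁅K, K⁆.topologicalClosure : Set G))
    {A B C : Subgroup G} (hA : IsOpen (A : Set G)) (hB : IsOpen (B : Set G)) (hAB : ⁅A, B⁆ ≤ C)
    (hC : IsClosed (C : Set G)) : IsOpen (C : Set G) :=
  have hUC : ⁅A ⊓ B, A ⊓ B⁆ ≤ C := (commutator_mono inf_le_left inf_le_right).trans hAB
  isOpen_mono (topologicalClosure_minimal _ hUC hC) (hcomm _ (hA.inter hB))

namespace Subgroup

variable {ι : Type*} {G : ι → Type*} [∀ i, Group (G i)]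

def coordSlice (H : Subgroup (∀ i, G i)) (S : Set ι) (j : ι) : Subgroup (G j) :=
  (H ⊓ pi S fun _ => ⊥).map (Pi.evalMonoidHom G j)

variable {H : Subgroup (∀ i, G i)}

theorem mem_coordSlice {S : Set ι} {j : ι} {x : G j} :
    x ∈ H.coordSlice S j ↔ ∃ g ∈ H, (∀ i ∈ S, g i = 1) ∧ g j = x := by
  simp [coordSlice, mem_pi, and_assoc]

theorem commutator_coordSlice_le (S T : Set ι) (j : ι) :
    ⁅H.coordSlice S j, H.coordSlice T j⁆ ≤ H.coordSlice (S ∪ T) j := by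
  rw [commutator_le]
  intro x hx y hy
  obtain ⟨g, hgH, hgS, rfl⟩ := mem_coordSlice.mp hx
  obtain ⟨h, hhH, hhT, rfl⟩ := mem_coordSlice.mp hy
  refine mem_coordSlice.mpr ⟨⁅g, h⁆, ?_, ?_, rfl⟩
  · rw [commutatorElement_def]
    exact H.mul_mem (H.mul_mem (H.mul_mem hgH hhH) (H.inv_mem hgH)) (H.inv_mem hhH)
  · rintro i (hi | hi)
    · simp [commutatorElement_def, hgS i hi]
    · simp [commutatorElement_def, hhT i hi]

theorem pi_coordSlice_compl_le [Finite ι] :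
    pi Set.univ (fun j => H.coordSlice {j}ᶜ j) ≤ H := by
  classical
  intro g hg
  refine pi_mem_of_mulSingle_mem g fun j => ?_
  obtain ⟨h, hH, h1, hj⟩ := mem_coordSlice.mp (hg j (Set.mem_univ j))
  convert hH
  funext i
  by_cases hij : i = j
  · subst hij; simp [hj]
  · simp [hij, h1 i hij]

variable [∀ i, TopologicalSpace (G i)]

theorem isClosed_coordSlice [∀ i, CompactSpace (G i)] [∀ i, T2Space (G i)]
    (hH : IsClosed (H : Set (∀ i, G i))) (S : Set ι) (j : ι) :
    IsClosed (H.coordSlice S j : Set (G j)) := by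
  have hker : IsClosed ((pi S fun _ => ⊥ : Subgroup (∀ i, G i)) : Set (∀ i, G i)) :=
    isClosed_set_pi fun i _ => isClosed_singleton
  exact ((hH.inter hker).isCompact.image (continuous_apply j)).isClosed

theorem isOpen_coordSlice_singleton_of_isOpen_map_prod {i j : ι}
    (h : IsOpen (H.map ((Pi.evalMonoidHom G i).prod (Pi.evalMonoidHom G j)) : Set (G i × G j))) :
    IsOpen (H.coordSlice {i} j : Set (G j)) ∧ IsOpen (H.coordSlice {j} i : Set (G i)) := by
  constructor
  · convert h.preimage (continuous_const.prodMk continuous_id :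
      Continuous fun x : G j => ((1 : G i), x))
    ext x
    simp [mem_coordSlice]
  · convert h.preimage (continuous_id.prodMk continuous_const :
      Continuous fun x : G i => (x, (1 : G j)))
    ext x
    simp [mem_coordSlice, and_comm]

variable [∀ i, IsTopologicalGroup (G i)]

theorem isOpen_coordSlice_insert [∀ i, CompactSpace (G i)] [∀ i, T2Space (G i)]
    (hH : IsClosed (H : Set (∀ i, G i))) {i j : ι}
    (hcomm : ∀ K : Subgroup (G j), IsOpen (K : Set (G j)) →
      IsOpen (⁅K, K⁆.topologicalClosure : Set (G j)))
    (hpair : ∀ l, l ≠ j → IsOpen (H.coordSlice {l} j : Set (G j))) (hij : i ≠ j)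
    {S : Set ι} (hS : S.Finite) (hjS : j ∉ S) :
    IsOpen (H.coordSlice (insert i S) j : Set (G j)) := by
  induction S, hS using Set.Finite.induction_on with
  | empty => simpa using hpair i hij
  | @insert a S _ _ ih =>
    have haj : a ≠ j := fun h => hjS (h ▸ Set.mem_insert a S)
    rw [Set.insert_comm, Set.insert_eq]
    have hjS' : j ∉ S := fun h => hjS (Set.mem_insert_of_mem a h)
    exact isOpen_of_commutator_le hcomm (hpair a haj) (ih hjS') (commutator_coordSlice_le _ _ j)
      (isClosed_coordSlice hH _ j)

theorem isOpen_of_forall_isOpen_coordSlice_compl [Finite ι]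
    (h : ∀ j, IsOpen (H.coordSlice {j}ᶜ j : Set (G j))) : IsOpen (H : Set (∀ i, G i)) :=
  isOpen_mono pi_coordSlice_compl_le <| by
    rw [coe_pi]
    exact isOpen_set_pi Set.finite_univ fun j _ => h j

end Subgroup

open Subgroup in
theorem ribet_open_in_product_general {k : ℕ} (hk : 2 ≤ k) (G : Fin k → Type*)
    [∀ i, Group (G i)] [∀ i, TopologicalSpace (G i)] [∀ i, IsTopologicalGroup (G i)]
    [∀ i, CompactSpace (G i)] [∀ i, T2Space (G i)]
    (hcomm : ∀ i, ∀ K : Subgroup (G i), IsOpen (K : Set (G i)) →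
      IsOpen (((⁅K, K⁆ : Subgroup (G i)).topologicalClosure : Subgroup (G i)) : Set (G i)))
    (G₀ : Subgroup (∀ i, G i)) (hclosed : IsClosed (G₀ : Set (∀ i, G i)))
    (hproj : ∀ i j : Fin k, i < j →
      IsOpen ((G₀.map ((Pi.evalMonoidHom G i).prod (Pi.evalMonoidHom G j)) :
        Subgroup (G i × G j)) : Set (G i × G j))) :
    IsOpen (G₀ : Set (∀ i, G i)) := by
  have : Nontrivial (Fin k) := Fin.nontrivial_iff_two_le.mpr hk
  have hpair : ∀ j i, i ≠ j → IsOpen (G₀.coordSlice {i} j : Set (G j)) := by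
    intro j i hij
    rcases hij.lt_or_gt with h | h
    · exact (isOpen_coordSlice_singleton_of_isOpen_map_prod (hproj i j h)).1
    · exact (isOpen_coordSlice_singleton_of_isOpen_map_prod (hproj j i h)).2
  refine isOpen_of_forall_isOpen_coordSlice_compl fun j => ?_
  obtain ⟨i, hij⟩ := exists_ne j
  rw [← Set.insert_eq_of_mem (Set.mem_compl_singleton_iff.mpr hij)]
  exact isOpen_coordSlice_insert hclosed (hcomm j) (hpair j) hij (Set.toFinite _)
    (Set.notMem_compl_iff.mpr rfl)

/-- Ribet's lemma: let `G₁, …, G_k` (`k ≥ 2`) be profinite groups such that for each `i`,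
the closure of the commutator subgroup of any open subgroup of `Gᵢ` is open in `Gᵢ`. If
`G₀` is a closed subgroup of `G₁ × ⋯ × G_k` whose image in `Gᵢ × Gⱼ` is open for all
`i < j`, then `G₀` is open in `G₁ × ⋯ × G_k`. -/
theorem ribet_open_in_product {k : ℕ} (hk : 2 ≤ k) (G : Fin k → Type*)
    [∀ i, Group (G i)] [∀ i, TopologicalSpace (G i)] [∀ i, IsTopologicalGroup (G i)]
    [∀ i, CompactSpace (G i)] [∀ i, TotallyDisconnectedSpace (G i)] [∀ i, T2Space (G i)]
    (hcomm : ∀ i, ∀ K : Subgroup (G i), IsOpen (K : Set (G i)) →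
      IsOpen (((⁅K, K⁆ : Subgroup (G i)).topologicalClosure : Subgroup (G i)) : Set (G i)))
    (G₀ : Subgroup (∀ i, G i)) (hclosed : IsClosed (G₀ : Set (∀ i, G i)))
    (hproj : ∀ i j : Fin k, i < j →
      IsOpen ((G₀.map ((Pi.evalMonoidHom G i).prod (Pi.evalMonoidHom G j)) :
        Subgroup (G i × G j)) : Set (G i × G j))) :
    IsOpen (G₀ : Set (∀ i, G i)) :=
  ribet_open_in_product_general hk G hcomm G₀ hclosed hproj
end

section
/- Let A be a commutative ring and I an ideal of A. Let X, Y ∈ SL₂(A) be matrices that are upper unitriangular modulo I, i.e. writing X = [[1+a, b],[c, 1+d]] one has a, c, d ∈ I, and similarly for Y. Then the lower-left entry of the commutator XYX⁻¹Y⁻¹ lies in I²; in particular the commutator is upper triangular modulo I² (and still upper unitriangular modulo I). -/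
/-- If `X, Y ∈ SL₂(A)` are upper unitriangular modulo an ideal `I` (writing
`X = [[1+a, b],[c, 1+d]]` with `a, c, d ∈ I`, and similarly for `Y`), then the lower-left
entry of the commutator `XYX⁻¹Y⁻¹` lies in `I²`; in particular the commutator is upper
triangular modulo `I²` and still upper unitriangular modulo `I`. -/
theorem commutator_unitriangular {A : Type*} [CommRing A] (I : Ideal A)
    (X Y : Matrix.SpecialLinearGroup (Fin 2) A)
    (hX : (X : Matrix (Fin 2) (Fin 2) A) 0 0 - 1 ∈ I ∧
      (X : Matrix (Fin 2) (Fin 2) A) 1 0 ∈ I ∧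
      (X : Matrix (Fin 2) (Fin 2) A) 1 1 - 1 ∈ I)
    (hY : (Y : Matrix (Fin 2) (Fin 2) A) 0 0 - 1 ∈ I ∧
      (Y : Matrix (Fin 2) (Fin 2) A) 1 0 ∈ I ∧
      (Y : Matrix (Fin 2) (Fin 2) A) 1 1 - 1 ∈ I) :
    ((X * Y * X⁻¹ * Y⁻¹ : Matrix.SpecialLinearGroup (Fin 2) A) :
        Matrix (Fin 2) (Fin 2) A) 1 0 ∈ I ^ 2 ∧
      ((X * Y * X⁻¹ * Y⁻¹ : Matrix.SpecialLinearGroup (Fin 2) A) :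
        Matrix (Fin 2) (Fin 2) A) 0 0 - 1 ∈ I ∧
      ((X * Y * X⁻¹ * Y⁻¹ : Matrix.SpecialLinearGroup (Fin 2) A) :
        Matrix (Fin 2) (Fin 2) A) 1 1 - 1 ∈ I := by
  obtain ⟨hA, hC, hD⟩ := hX
  obtain ⟨hE, hG, hH⟩ := hY
  set a := (X : Matrix (Fin 2) (Fin 2) A) 0 0 with ha
  set b := (X : Matrix (Fin 2) (Fin 2) A) 0 1 with hb
  set c := (X : Matrix (Fin 2) (Fin 2) A) 1 0 with hc
  set d := (X : Matrix (Fin 2) (Fin 2) A) 1 1 with hd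
  set e := (Y : Matrix (Fin 2) (Fin 2) A) 0 0 with he
  set f := (Y : Matrix (Fin 2) (Fin 2) A) 0 1 with hf
  set g := (Y : Matrix (Fin 2) (Fin 2) A) 1 0 with hg
  set h := (Y : Matrix (Fin 2) (Fin 2) A) 1 1 with hh
  have hq : c * (-(h - 1) * f - f) + (d - 1) * ((e - 1) + (e - 1) * (h - 1) - (h - 1)
      - (h - 1) * (h - 1)) + (e - 1) * (1 + g * b + (h - 1)) + g * (b - f)
      + (h - 1) * (-1 - (h - 1)) ∈ I := by
    exact add_mem (add_mem (add_mem (add_mem (I.mul_mem_right _ hC) (I.mul_mem_right _ hD))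
      (I.mul_mem_right _ hE)) (I.mul_mem_right _ hG)) (I.mul_mem_right _ hH)
  have key : ((X * Y * X⁻¹ * Y⁻¹ : Matrix.SpecialLinearGroup (Fin 2) A) :
      Matrix (Fin 2) (Fin 2) A) 1 0 =
      ((a - 1) * g) * (-(c * f) - (d - 1) - (d - 1) * (h - 1) - 1 - (h - 1))
      + c * (c * (-(h - 1) * f - f) + (d - 1) * ((e - 1) + (e - 1) * (h - 1) - (h - 1)
          - (h - 1) * (h - 1)) + (e - 1) * (1 + g * b + (h - 1)) + g * (b - f)
          + (h - 1) * (-1 - (h - 1)))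
      + ((d - 1) * g) * ((d - 1) + (d - 1) * (h - 1) + 1 + g * b + (h - 1))
      + (g * g) * b := by
    simp only [Matrix.SpecialLinearGroup.coe_mul, Matrix.SpecialLinearGroup.coe_inv,
      Matrix.adjugate_fin_two, Matrix.mul_apply, Fin.sum_univ_succ, Fin.sum_univ_zero, Fin.succ_zero_eq_one,
      Matrix.of_apply, Matrix.cons_val', Matrix.cons_val_zero, Matrix.cons_val_one,
      Matrix.head_cons, Matrix.empty_val', Matrix.cons_val_fin_one, Matrix.head_fin_const,
      ← ha, ← hb, ← hc, ← hd, ← he, ← hf, ← hg, ← hh]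
    ring
  have mem10 : ((X * Y * X⁻¹ * Y⁻¹ : Matrix.SpecialLinearGroup (Fin 2) A) :
      Matrix (Fin 2) (Fin 2) A) 1 0 ∈ I ^ 2 := by
    rw [key, pow_two]
    refine add_mem (add_mem (add_mem ?_ ?_) ?_) ?_
    · exact Ideal.mul_mem_right _ _ (Ideal.mul_mem_mul hA hG)
    · exact Ideal.mul_mem_mul hC hq
    · exact Ideal.mul_mem_right _ _ (Ideal.mul_mem_mul hD hG)
    · exact Ideal.mul_mem_right _ _ (Ideal.mul_mem_mul hG hG)
  refine ⟨mem10, ?_, ?_⟩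
  · have key2 : ((X * Y * X⁻¹ * Y⁻¹ : Matrix.SpecialLinearGroup (Fin 2) A) :
        Matrix (Fin 2) (Fin 2) A) 0 0 - 1 =
        (h-1) * 1 + (d-1) * (1 + (h-1) + (e-1) + (e-1)*(h-1) + g*b + g*(h-1)*b) + (e-1) * (1 + (h-1) + g*b) + (a-1) * (1 + (h-1) + (d-1) + (d-1)*(h-1) + (e-1) + (e-1)*(h-1) + (d-1)*(e-1) + (d-1)*(e-1)*(h-1) - c*f - c*(h-1)*f + (e-1)*g*b - 2*g*f - (a-1)*g*f - g*(h-1)*b) + g * (b + g*b*b - f) + c * (-f - (h-1)*f - b - 2*(h-1)*b - (h-1)*(h-1)*b) := by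
      simp only [Matrix.SpecialLinearGroup.coe_mul, Matrix.SpecialLinearGroup.coe_inv,
        Matrix.adjugate_fin_two, Matrix.mul_apply, Fin.sum_univ_succ, Fin.sum_univ_zero, Fin.succ_zero_eq_one,
        Matrix.of_apply, Matrix.cons_val', Matrix.cons_val_zero, Matrix.cons_val_one,
        Matrix.head_cons, Matrix.empty_val', Matrix.cons_val_fin_one, Matrix.head_fin_const,
        ← ha, ← hb, ← hc, ← hd, ← he, ← hf, ← hg, ← hh]
      ring
    rw [key2]
    refine add_mem (add_mem (add_mem (add_mem (add_mem ?_ ?_) ?_) ?_) ?_) ?_ <;>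
      first
        | exact I.mul_mem_right _ hH
        | exact I.mul_mem_right _ hD
        | exact I.mul_mem_right _ hE
        | exact I.mul_mem_right _ hA
        | exact I.mul_mem_right _ hG
        | exact I.mul_mem_right _ hC
  · have key2 : ((X * Y * X⁻¹ * Y⁻¹ : Matrix.SpecialLinearGroup (Fin 2) A) :
        Matrix (Fin 2) (Fin 2) A) 1 1 - 1 =
        c * (-(d-1)*(e-1)*f + c*f*f + (h-1)*f + (d-1)*(h-1)*f - b - 2*(e-1)*b - (e-1)*(e-1)*b + f) + g * (-f - b) + (d-1) * (-2*g*f - (d-1)*g*f - g*b - (e-1)*g*b + 1 + (e-1) + (h-1) + (e-1)*(h-1)) + (e-1) * (-g*b + 1 + (h-1)) + (a-1) * (c*f + c*(e-1)*f + 1 + (e-1) + (h-1) + (e-1)*(h-1) + (d-1) + (d-1)*(e-1) + (d-1)*(h-1) + (d-1)*(e-1)*(h-1)) + (h-1) * 1 := by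
      simp only [Matrix.SpecialLinearGroup.coe_mul, Matrix.SpecialLinearGroup.coe_inv,
        Matrix.adjugate_fin_two, Matrix.mul_apply, Fin.sum_univ_succ, Fin.sum_univ_zero, Fin.succ_zero_eq_one,
        Matrix.of_apply, Matrix.cons_val', Matrix.cons_val_zero, Matrix.cons_val_one,
        Matrix.head_cons, Matrix.empty_val', Matrix.cons_val_fin_one, Matrix.head_fin_const,
        ← ha, ← hb, ← hc, ← hd, ← he, ← hf, ← hg, ← hh]
      ring
    rw [key2]
    refine add_mem (add_mem (add_mem (add_mem (add_mem ?_ ?_) ?_) ?_) ?_) ?_ <;>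
      first
        | exact I.mul_mem_right _ hC
        | exact I.mul_mem_right _ hG
        | exact I.mul_mem_right _ hD
        | exact I.mul_mem_right _ hE
        | exact I.mul_mem_right _ hA
        | exact I.mul_mem_right _ hH
end

section
/- Let B be a field equipped with an action of a group G by field automorphisms, and let X and X′ be finite-dimensional B-vector spaces equipped with semilinear G-actions (g(λx) = g(λ)·g(x) for λ ∈ B), and suppose both X and X′ are irreducible, i.e. have no G-stable B-subspaces other than 0 and the whole space. If the tensor product X ⊗_B X′, with the diagonal semilinear G-action, admits a G-stable B-subspace of codimension 1, then dim_B X = dim_B X′. -/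
open scoped TensorProduct

/-- Let `B` be a field with an action of a group `G` by field automorphisms `φ`, and let
`X`, `X′` be finite-dimensional `B`-vector spaces with semilinear `G`-actions `ρ`, `ρ′`
(so `g(λx) = φ(g)(λ)·g(x)`), both irreducible in the sense that the only `G`-stable
`B`-subspaces are `0` and the whole space. If the tensor product `X ⊗_B X′`, with the
diagonal semilinear `G`-action `τ`, admits a `G`-stable `B`-subspace of codimension `1`,
then `dim_B X = dim_B X′`. -/
theorem dim_eq_of_codim_one_quotient {B : Type*} [Field B] {G : Type*} [Group G]
    (φ : G →* (B ≃+* B))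
    {X X' : Type*} [AddCommGroup X] [Module B X] [AddCommGroup X'] [Module B X']
    [FiniteDimensional B X] [FiniteDimensional B X']
    (ρ : G → X →+ X) (ρ' : G → X' →+ X')
    (hρ1 : ρ 1 = AddMonoidHom.id X)
    (hρm : ∀ g h : G, ρ (g * h) = (ρ g).comp (ρ h))
    (hρs : ∀ (g : G) (b : B) (x : X), ρ g (b • x) = φ g b • ρ g x)
    (hρ'1 : ρ' 1 = AddMonoidHom.id X')
    (hρ'm : ∀ g h : G, ρ' (g * h) = (ρ' g).comp (ρ' h))
    (hρ's : ∀ (g : G) (b : B) (x : X'), ρ' g (b • x) = φ g b • ρ' g x)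
    (hXirr : ∀ W : Submodule B X, (∀ g : G, ∀ x ∈ W, ρ g x ∈ W) → W = ⊥ ∨ W = ⊤)
    (hX'irr : ∀ W : Submodule B X', (∀ g : G, ∀ x ∈ W, ρ' g x ∈ W) → W = ⊥ ∨ W = ⊤)
    (τ : G → X ⊗[B] X' →+ X ⊗[B] X')
    (hτ : ∀ (g : G) (x : X) (x' : X'), τ g (x ⊗ₜ[B] x') = (ρ g x) ⊗ₜ[B] (ρ' g x'))
    (U : Submodule B (X ⊗[B] X'))
    (hU : ∀ g : G, ∀ t ∈ U, τ g t ∈ U)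
    (hcodim : Module.finrank B ((X ⊗[B] X') ⧸ U) = 1) :
    Module.finrank B X = Module.finrank B X' := by
  classical
  -- ρ' g is surjective
  have hρ'surj : ∀ g : G, Function.Surjective (ρ' g) := by
    intro g y
    refine ⟨ρ' g⁻¹ y, ?_⟩
    have := congrArg (fun f : X' →+ X' => f y) (hρ'm g g⁻¹)
    simp only [mul_inv_cancel, hρ'1] at this
    exact this.symm
  have hρsurj : ∀ g : G, Function.Surjective (ρ g) := by
    intro g y
    refine ⟨ρ g⁻¹ y, ?_⟩
    have := congrArg (fun f : X →+ X => f y) (hρm g g⁻¹)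
    simp only [mul_inv_cancel, hρ1] at this
    exact this.symm
  have hUtop : U ≠ ⊤ := by
    intro h
    rw [h] at hcodim
    have : Subsingleton ((X ⊗[B] X') ⧸ (⊤ : Submodule B (X ⊗[B] X'))) :=
      Submodule.Quotient.subsingleton_iff.mpr rfl
    rw [Module.finrank_zero_of_subsingleton] at hcodim
    exact one_ne_zero hcodim.symm
  -- left kernel
  have Wleft : ∀ x : X, (∀ x' : X', x ⊗ₜ[B] x' ∈ U) → x = 0 := by
    intro x0 hx0
    let W : Submodule B X :=
      { carrier := {x | ∀ x' : X', x ⊗ₜ[B] x' ∈ U}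
        add_mem' := by
          intro a b ha hb x'
          rw [TensorProduct.add_tmul]
          exact U.add_mem (ha x') (hb x')
        zero_mem' := by
          intro x'
          rw [TensorProduct.zero_tmul]
          exact U.zero_mem
        smul_mem' := by
          intro c a ha x'
          rw [← TensorProduct.smul_tmul']
          exact U.smul_mem c (ha x') }
    have hWstable : ∀ g : G, ∀ x ∈ W, ρ g x ∈ W := by
      intro g x hx y
      obtain ⟨z, rfl⟩ := hρ'surj g y
      rw [← hτ]
      exact hU g _ (hx z)
    rcases hXirr W hWstable with hbot | htop
    · have : x0 ∈ W := hx0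
      rwa [hbot, Submodule.mem_bot] at this
    · exfalso
      apply hUtop
      rw [eq_top_iff, ← TensorProduct.span_tmul_eq_top B X X', Submodule.span_le]
      rintro t ⟨m, n, rfl⟩
      have : m ∈ W := htop ▸ Submodule.mem_top
      exact this n
  have Wright : ∀ x' : X', (∀ x : X, x ⊗ₜ[B] x' ∈ U) → x' = 0 := by
    intro x0 hx0
    let W : Submodule B X' :=
      { carrier := {y | ∀ x : X, x ⊗ₜ[B] y ∈ U}
        add_mem' := by
          intro a b ha hb x
          rw [TensorProduct.tmul_add]
          exact U.add_mem (ha x) (hb x)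
        zero_mem' := by
          intro x
          rw [TensorProduct.tmul_zero]
          exact U.zero_mem
        smul_mem' := by
          intro c a ha x
          rw [TensorProduct.tmul_smul]
          exact U.smul_mem c (ha x) }
    have hWstable : ∀ g : G, ∀ y ∈ W, ρ' g y ∈ W := by
      intro g y hy x
      obtain ⟨z, rfl⟩ := hρsurj g x
      rw [← hτ]
      exact hU g _ (hy z)
    rcases hX'irr W hWstable with hbot | htop
    · have : x0 ∈ W := hx0
      rwa [hbot, Submodule.mem_bot] at this
    · exfalso
      apply hUtop
      rw [eq_top_iff, ← TensorProduct.span_tmul_eq_top B X X', Submodule.span_le]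
      rintro t ⟨m, n, rfl⟩
      have : n ∈ W := htop ▸ Submodule.mem_top
      exact this m
  set Q := (X ⊗[B] X') ⧸ U with hQ
  let b : X →ₗ[B] X' →ₗ[B] Q := TensorProduct.curry U.mkQ
  have hbinj : Function.Injective b := by
    rw [← LinearMap.ker_eq_bot, Submodule.eq_bot_iff]
    intro x hx
    apply Wleft
    intro x'
    have : b x x' = 0 := by rw [hx]; rfl
    rwa [TensorProduct.curry_apply, Submodule.mkQ_apply,
      Submodule.Quotient.mk_eq_zero] at this
  let b' : X' →ₗ[B] X →ₗ[B] Q :=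
    TensorProduct.curry (U.mkQ ∘ₗ (TensorProduct.comm B X' X).toLinearMap)
  have hb'inj : Function.Injective b' := by
    rw [← LinearMap.ker_eq_bot, Submodule.eq_bot_iff]
    intro y hy
    apply Wright
    intro x
    have : b' y x = 0 := by rw [hy]; rfl
    simp only [b', TensorProduct.curry_apply, LinearMap.comp_apply,
      LinearEquiv.coe_coe, TensorProduct.comm_tmul, Submodule.mkQ_apply,
      Submodule.Quotient.mk_eq_zero] at this
    rwa [Submodule.mkQ_apply, Submodule.Quotient.mk_eq_zero] at this
  have h1 : Module.finrank B X ≤ Module.finrank B X' := by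
    calc Module.finrank B X ≤ Module.finrank B (X' →ₗ[B] Q) :=
          LinearMap.finrank_le_finrank_of_injective hbinj
      _ = Module.finrank B X' * Module.finrank B Q := Module.finrank_linearMap B B _ _
      _ = Module.finrank B X' := by rw [hcodim, mul_one]
  have h2 : Module.finrank B X' ≤ Module.finrank B X := by
    calc Module.finrank B X' ≤ Module.finrank B (X →ₗ[B] Q) :=
          LinearMap.finrank_le_finrank_of_injective hb'inj
      _ = Module.finrank B X * Module.finrank B Q := Module.finrank_linearMap B B _ _
      _ = Module.finrank B X := by rw [hcodim, mul_one]
  exact le_antisymm h1 h2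
end

section
/- Let K be a field and n ≥ 2. Suppose g ∈ GLₙ(K) satisfies g·U_{ij}(K)·g⁻¹ = U_{ij}(K) for every pair i ≠ j, where U_{ij}(K) = {1ₙ + t·E_{ij} : t ∈ K} is the root subgroup of elementary matrices in position (i,j). Then g is a diagonal matrix. -/
open Matrix

/-! If `g` normalizes `U_{ij}`, then `g E_{ij} g⁻¹` is a multiple `s E_{ij}`, i.e.
`g E_{ij} = s E_{ij} g`. The `(a, j)` entry of the right side vanishes for `a ≠ i`, while that of
the left side is `g a i`; taking `j := a` shows every off-diagonal entry of `g` vanishes. -/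

namespace Matrix

variable {n R : Type*} [Fintype n] [DecidableEq n]

theorem mul_eq_smul_mul_of_conj_one_add_eq [CommRing R] (g : GL n R) {E : Matrix n n R} {s : R}
    (hs : (g : Matrix n n R) * (1 + E) * (g⁻¹ : GL n R) = 1 + s • E) :
    (g : Matrix n n R) * E = s • (E * g) := by
  have hg : ((g⁻¹ : GL n R) : Matrix n n R) * g = 1 := g.inv_mul
  have h := congrArg (· * (g : Matrix n n R)) hs
  simp only [mul_assoc, hg, mul_one, mul_add, add_mul, one_mul, smul_mul_assoc] at h
  exact add_left_cancel h

theorem apply_eq_zero_of_mul_single_eq_smul_single_mul [CommSemiring R] {G : Matrix n n R}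
    {i j a : n} {s : R} (hG : G * single i j 1 = s • (single i j 1 * G)) (ha : a ≠ i) :
    G a i = 0 := by
  simpa [single_mul_apply_of_ne 1 i j a j ha G] using congrFun (congrFun hG a) j

end Matrix

theorem diagonal_of_normalizes_root_subgroups_general {K : Type*} [Field K] {n : ℕ}
    (g : GL (Fin n) K)
    (h : ∀ i j : Fin n, i ≠ j →
      (fun M : Matrix (Fin n) (Fin n) K =>
          (g : Matrix (Fin n) (Fin n) K) * M * ((g⁻¹ : GL (Fin n) K) : Matrix (Fin n) (Fin n) K)) ''
        {M : Matrix (Fin n) (Fin n) K | ∃ t : K, M = 1 + t • Matrix.single i j 1} =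
      {M : Matrix (Fin n) (Fin n) K | ∃ t : K, M = 1 + t • Matrix.single i j 1}) :
    (g : Matrix (Fin n) (Fin n) K).IsDiag := by
  intro a i ha
  obtain ⟨s, hs⟩ := (h i a ha.symm).subset (Set.mem_image_of_mem _ ⟨1, rfl⟩)
  rw [one_smul] at hs
  exact apply_eq_zero_of_mul_single_eq_smul_single_mul
    (mul_eq_smul_mul_of_conj_one_add_eq g hs) ha

/-- If `g ∈ GLₙ(K)` (for `K` a field, `n ≥ 2`) normalizes every root subgroup
`U_{ij}(K) = {1ₙ + t·E_{ij} : t ∈ K}` for `i ≠ j`, then `g` is diagonal. -/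
theorem diagonal_of_normalizes_root_subgroups {K : Type*} [Field K] {n : ℕ} (hn : 2 ≤ n)
    (g : GL (Fin n) K)
    (h : ∀ i j : Fin n, i ≠ j →
      (fun M : Matrix (Fin n) (Fin n) K =>
          (g : Matrix (Fin n) (Fin n) K) * M * ((g⁻¹ : GL (Fin n) K) : Matrix (Fin n) (Fin n) K)) ''
        {M : Matrix (Fin n) (Fin n) K | ∃ t : K, M = 1 + t • Matrix.single i j 1} =
      {M : Matrix (Fin n) (Fin n) K | ∃ t : K, M = 1 + t • Matrix.single i j 1}) :
    (g : Matrix (Fin n) (Fin n) K).IsDiag :=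
  diagonal_of_normalizes_root_subgroups_general g h
end

section
/- Let R be an integral domain containing ℚ, and let sp₄(R) be the symplectic Lie algebra with respect to the antidiagonal symplectic form J (J₁₄ = J₂₃ = 1, J₃₂ = J₄₁ = −1). Let 𝔤 be a ℚ-Lie subalgebra of sp₄(R). Suppose that for each of the eight roots α of sp₄ (relative to the diagonal torus), with associated root space 𝔲^α(R) = R·X_α, the set {x ∈ R : x·X_α ∈ 𝔤} contains a non-zero ideal 𝔞_α of R. Then 𝔤 contains the congruence subalgebra 𝔞·sp₄(R), where 𝔞 = ∏_α 𝔞_α is the product over all eight roots. -/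
/-!
Every `M ∈ sp₄(R)` is an `R`-combination of the eight root vectors `X_α` and of the two Cartan
elements `H₁ = [spRoot R 4, spRoot R 5]`, `H₂ = [spRoot R 6, spRoot R 7]`, the coefficients being
entries of `M`. For `r ∈ 𝔞` the root components `r·m·X_α` lie in `𝔤` because `𝔞 ⊆ 𝔞_α`, and the
Cartan components `r·m·Hᵢ` lie in `𝔤` because `𝔞 ⊆ 𝔞_β·𝔞_γ` for the pair of opposite roots
`β, γ` with `[X_β, X_γ] = Hᵢ`, and the bracket of `x·X_β` and `y·X_γ` is `(x·y)·[X_β, X_γ]`.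
-/

open Matrix

/-- The 4×4 antidiagonal symplectic form `J` with `J₁₄ = J₂₃ = 1`, `J₃₂ = J₄₁ = −1`. -/
def Jsp (R : Type*) [CommRing R] : Matrix (Fin 4) (Fin 4) R :=
  !![0, 0, 0, 1; 0, 0, 1, 0; 0, -1, 0, 0; -1, 0, 0, 0]

/-- The eight standard root vectors `X_α` of `sp₄` relative to the diagonal torus. -/
def spRoot (R : Type*) [CommRing R] : Fin 8 → Matrix (Fin 4) (Fin 4) R :=
  ![single 0 1 1 - single 2 3 1,
    single 1 0 1 - single 3 2 1,
    single 0 2 1 + single 1 3 1,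
    single 2 0 1 + single 3 1 1,
    single 0 3 1,
    single 3 0 1,
    single 1 2 1,
    single 2 1 1]

namespace Ideal

variable {ι R : Type*} [CommSemiring R] {s : Finset ι} {a : ι → Ideal R} {i j : ι}

theorem prod_le_of_mem (hi : i ∈ s) : s.prod a ≤ a i :=
  prod_le_inf.trans (Finset.inf_le hi)

theorem prod_le_mul_of_mem [DecidableEq ι] (hi : i ∈ s) (hj : j ∈ s) (hij : i ≠ j) :
    s.prod a ≤ a i * a j := by
  rw [← Finset.mul_prod_erase s a hi,
    ← Finset.mul_prod_erase _ a (Finset.mem_erase.2 ⟨hij.symm, hj⟩)]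
  exact mul_mono_right mul_le_left

end Ideal

theorem Submodule.smul_commutator_mem_of_mem_mul {K R A : Type*} [Semiring K] [CommRing R]
    [Ring A] [Algebra R A] [Module K A] (g : Submodule K A)
    (hbracket : ∀ x ∈ g, ∀ y ∈ g, x * y - y * x ∈ g) {I J : Ideal R} {X Y : A}
    (hX : ∀ x ∈ I, x • X ∈ g) (hY : ∀ y ∈ J, y • Y ∈ g) {s : R} (hs : s ∈ I * J) :
    s • (X * Y - Y * X) ∈ g := by
  refine Submodule.mul_induction_on hs (fun x hx y hy => ?_) (fun s t hs ht => ?_)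
  · have h := hbracket _ (hX x hx) _ (hY y hy)
    rwa [smul_mul_smul_comm, smul_mul_smul_comm, mul_comm y x, ← smul_sub] at h
  · rw [add_smul]
    exact g.add_mem hs ht

section Sp4

variable {R : Type*} [CommRing R]

theorem spRoot_commutator_four_five :
    spRoot R 4 * spRoot R 5 - spRoot R 5 * spRoot R 4 = single 0 0 1 - single 3 3 1 := by
  simp [spRoot]

theorem spRoot_commutator_six_seven :
    spRoot R 6 * spRoot R 7 - spRoot R 7 * spRoot R 6 = single 1 1 1 - single 2 2 1 := by
  simp [spRoot]

def spRootCoeff (M : Matrix (Fin 4) (Fin 4) R) : Fin 8 → R :=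
  ![M 0 1, M 1 0, M 0 2, M 2 0, M 0 3, M 3 0, M 1 2, M 2 1]

theorem entries_of_transpose_mul_Jsp_add_eq_zero {M : Matrix (Fin 4) (Fin 4) R}
    (hM : Mᵀ * Jsp R + Jsp R * M = 0) :
    M 3 3 = -M 0 0 ∧ M 2 2 = -M 1 1 ∧ M 2 3 = -M 0 1 ∧ M 3 2 = -M 1 0 ∧
      M 3 1 = M 2 0 ∧ M 1 3 = M 0 2 := by
  have h i j : (Mᵀ * Jsp R + Jsp R * M) i j = 0 := by rw [hM]; rfl
  have e30 := h 3 0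
  have e21 := h 2 1
  have e31 := h 3 1
  have e20 := h 2 0
  have e10 := h 1 0
  have e32 := h 3 2
  simp [Jsp, mul_apply, vecMul, dotProduct, Fin.sum_univ_four] at e30 e21 e31 e20 e10 e32
  exact ⟨by linear_combination -e30, by linear_combination -e21, by linear_combination -e31,
    by linear_combination -e20, by linear_combination -e10, by linear_combination e32⟩

theorem eq_cartan_add_sum_spRoot {M : Matrix (Fin 4) (Fin 4) R}
    (hM : Mᵀ * Jsp R + Jsp R * M = 0) :
    M = M 0 0 • (single 0 0 1 - single 3 3 1) + M 1 1 • (single 1 1 1 - single 2 2 1)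
      + ∑ α, spRootCoeff M α • spRoot R α := by
  obtain ⟨h33, h22, h23, h32, h31, h13⟩ := entries_of_transpose_mul_Jsp_add_eq_zero hM
  ext i j
  fin_cases i <;> fin_cases j <;>
    simp [spRoot, spRootCoeff, Fin.sum_univ_eight, h33, h22, h23, h32, h31, h13]

end Sp4

theorem congruence_subalgebra_of_roots_general {R : Type*} [CommRing R] [Algebra ℚ R]
    (g : Submodule ℚ (Matrix (Fin 4) (Fin 4) R))
    (hbracket : ∀ x ∈ g, ∀ y ∈ g, x * y - y * x ∈ g)
    (a : Fin 8 → Ideal R)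
    (hroot : ∀ α : Fin 8, ∀ x ∈ a α, x • spRoot R α ∈ g) :
    ∀ r ∈ (∏ α : Fin 8, a α : Ideal R), ∀ M : Matrix (Fin 4) (Fin 4) R,
      Mᵀ * Jsp R + Jsp R * M = 0 → r • M ∈ g := by
  intro r hr M hM
  have hcartan {β γ : Fin 8} (hβγ : β ≠ γ) (t : R) :
      (r * t) • (spRoot R β * spRoot R γ - spRoot R γ * spRoot R β) ∈ g :=
    g.smul_commutator_mem_of_mem_mul hbracket (hroot β) (hroot γ)
      (Ideal.prod_le_mul_of_mem (Finset.mem_univ β) (Finset.mem_univ γ) hβγ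
        (Ideal.mul_mem_right t _ hr))
  rw [eq_cartan_add_sum_spRoot hM, smul_add, smul_add, Finset.smul_sum,
    ← spRoot_commutator_four_five, ← spRoot_commutator_six_seven, smul_smul, smul_smul]
  refine g.add_mem (g.add_mem (hcartan (by decide) _) (hcartan (by decide) _))
    (g.sum_mem fun α _ => ?_)
  rw [smul_smul]
  exact hroot α _ (Ideal.prod_le_of_mem (Finset.mem_univ α) (Ideal.mul_mem_right _ _ hr))

/-- Let `R` be an integral domain containing `ℚ` and `𝔤` a `ℚ`-Lie subalgebra of `sp₄(R)`.
If for each of the eight roots `α` the set `{x ∈ R : x·X_α ∈ 𝔤}` contains a non-zero ideal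
`𝔞_α` of `R`, then `𝔤` contains the congruence subalgebra `𝔞·sp₄(R)` where `𝔞 = ∏_α 𝔞_α`. -/
theorem congruence_subalgebra_of_roots {R : Type*} [CommRing R] [IsDomain R] [Algebra ℚ R]
    (g : Submodule ℚ (Matrix (Fin 4) (Fin 4) R))
    (hbracket : ∀ x ∈ g, ∀ y ∈ g, x * y - y * x ∈ g)
    (hsp : ∀ x ∈ g, xᵀ * Jsp R + Jsp R * x = 0)
    (a : Fin 8 → Ideal R) (hne : ∀ α, a α ≠ ⊥)
    (hroot : ∀ α : Fin 8, ∀ x ∈ a α, x • spRoot R α ∈ g) :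
    ∀ r ∈ (∏ α : Fin 8, a α : Ideal R), ∀ M : Matrix (Fin 4) (Fin 4) R,
      Mᵀ * Jsp R + Jsp R * M = 0 → r • M ∈ g :=
  congruence_subalgebra_of_roots_general g hbracket a hroot
end

section
/- Let R be a commutative local ring and let d₁, …, dₙ ∈ R be elements such that dᵢ − dⱼ is a unit of R for all i ≠ j. Let M ∈ Mₙ(R) be a matrix whose characteristic polynomial equals ∏ᵢ (X − dᵢ). Then there exists γ ∈ GLₙ(R) with γ⁻¹·M·γ = diag(d₁, …, dₙ). -/
/-!
Write `χ_M = (X - dᵢ) qᵢ`. By Cayley–Hamilton, `M qᵢ(M) = dᵢ qᵢ(M)`, so `qᵢ(M)` sends any vector to a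
`dᵢ`-eigenvector of `M`. Applied to a lift of a residual `dᵢ`-eigenvector, it yields one that is
nonzero modulo `𝔪`, because `qᵢ(dᵢ) = ∏_{j ≠ i} (dᵢ - dⱼ)` is a unit. Modulo `𝔪` these eigenvectors
belong to distinct eigenvalues, so they are linearly independent; the matrix with these columns is
therefore invertible over the residue field, hence over `R`, and it conjugates `M` to `diag(d)`.
-/

open Matrix Polynomial

namespace Matrix

variable {ι R : Type*} [Fintype ι] [DecidableEq ι] [CommRing R]

theorem aeval_mulVec_of_mulVec_eq_smul {N : Matrix ι ι R} {v : ι → R} {a : R}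
    (hv : N *ᵥ v = a • v) (q : R[X]) : aeval N q *ᵥ v = q.eval a • v := by
  have h := Module.End.aeval_apply_of_mem_apply_eq_smul (f := toLinAlgEquiv' N) (p := q)
    (by rwa [toLinAlgEquiv'_apply])
  rwa [aeval_algEquiv, AlgHom.comp_apply, AlgEquiv.coe_toAlgHom, toLinAlgEquiv'_apply] at h

theorem map_aeval {S : Type*} [CommRing S] (f : R →+* S) (M : Matrix ι ι R) (q : R[X]) :
    (aeval M q).map f = aeval (M.map f) (q.map f) :=
  map_aeval_eq_aeval_map (ψ := f.mapMatrix)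
    (by ext; simp [algebraMap_matrix_apply, apply_ite f]) q M

theorem mul_aeval_eq_smul_of_charpoly_eq_mul {M : Matrix ι ι R} {a : R} {q : R[X]}
    (h : M.charpoly = (X - C a) * q) : M * aeval M q = a • aeval M q := by
  have := aeval_self_charpoly M
  rwa [h, map_mul, map_sub, aeval_X, aeval_C, Algebra.algebraMap_eq_smul_one, sub_mul,
    smul_one_mul, sub_eq_zero] at this

theorem exists_mulVec_eq_smul_of_isRoot_charpoly {K : Type*} [Field K] {N : Matrix ι ι K}
    {a : K} (h : N.charpoly.IsRoot a) : ∃ v ≠ 0, N *ᵥ v = a • v := by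
  rw [← charpoly_toLin', ← Module.End.hasEigenvalue_iff_isRoot_charpoly] at h
  obtain ⟨v, hv⟩ := h.exists_hasEigenvector
  exact ⟨v, hv.2, by simpa using hv.apply_eq_smul⟩

theorem isUnit_of_isUnit_map {S : Type*} [CommRing S] (f : R →+* S) [IsLocalHom f]
    {A : Matrix ι ι R} (h : IsUnit (A.map f)) : IsUnit A := by
  rw [isUnit_iff_isUnit_det, ← RingHom.mapMatrix_apply, ← RingHom.map_det] at *
  exact (isUnit_map_iff f _).mp h

theorem mul_eq_mul_diagonal_of_mulVec_col {M γ : Matrix ι ι R} {d : ι → R}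
    (h : ∀ i, M *ᵥ γ.col i = d i • γ.col i) : M * γ = γ * diagonal d := by
  ext r i
  rw [mul_diagonal, mul_comm]
  exact congrFun (h i) r

section IsLocalRing

open IsLocalRing

variable [IsLocalRing R]

theorem exists_mulVec_eq_smul_residue_ne_zero {M : Matrix ι ι R} {a : R} {q : R[X]}
    (h : M.charpoly = (X - C a) * q) (hq : IsUnit (q.eval a)) :
    ∃ c : ι → R, M *ᵥ c = a • c ∧ residue R ∘ c ≠ 0 := by
  have hroot : (M.map (residue R)).charpoly.IsRoot (residue R a) := by
    simp [charpoly_map, h]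
  obtain ⟨v', hv'0, hv'⟩ := exists_mulVec_eq_smul_of_isRoot_charpoly hroot
  obtain ⟨v, rfl⟩ := residue_surjective.comp_left v'
  refine ⟨aeval M q *ᵥ v, by
    rw [mulVec_mulVec, mul_aeval_eq_smul_of_charpoly_eq_mul h, smul_mulVec], ?_⟩
  have hred : residue R ∘ (aeval M q *ᵥ v) =
      (q.map (residue R)).eval (residue R a) • (residue R ∘ v) := by
    ext i
    rw [Function.comp_apply, RingHom.map_mulVec, map_aeval, aeval_mulVec_of_mulVec_eq_smul hv']
  rw [hred]
  exact smul_ne_zero (by rwa [eval_map_apply, residue_ne_zero_iff_isUnit]) hv'0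

theorem isUnit_of_mulVec_col_eq_smul {M γ : Matrix ι ι R} {d : ι → R}
    (hd : Pairwise fun i j ↦ IsUnit (d i - d j)) (hγ : ∀ i, M *ᵥ γ.col i = d i • γ.col i)
    (hγ0 : ∀ i, residue R ∘ γ.col i ≠ 0) : IsUnit γ := by
  refine isUnit_of_isUnit_map (residue R) (linearIndependent_cols_iff_isUnit.mp ?_)
  refine Module.End.eigenvectors_linearIndependent' (M.map (residue R)).toLin'
    (residue R ∘ d) ?_ _ fun i ↦ ⟨Module.End.mem_eigenspace_iff.mpr ?_, hγ0 i⟩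
  · intro i j hij
    by_contra hne
    have := (residue_ne_zero_iff_isUnit _).mpr (hd hne)
    rw [map_sub, sub_ne_zero] at this
    exact this hij
  · ext r
    rw [toLin'_apply]
    exact (RingHom.map_mulVec _ M (γ.col i) r).symm.trans
      ((congrArg _ (congrFun (hγ i) r)).trans (map_mul _ _ _))

end IsLocalRing

end Matrix

/-- Over a commutative local ring `R`, a matrix whose characteristic polynomial is
`∏ᵢ (X − dᵢ)` with `dᵢ − dⱼ` a unit for all `i ≠ j` is conjugate to `diag(d₁, …, dₙ)`. -/
theorem diagonalizable_of_charpoly_unit_differences {R : Type*} [CommRing R] [IsLocalRing R]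
    {n : ℕ} (d : Fin n → R) (hd : ∀ i j : Fin n, i ≠ j → IsUnit (d i - d j))
    (M : Matrix (Fin n) (Fin n) R) (hM : M.charpoly = ∏ i : Fin n, (X - C (d i))) :
    ∃ γ : (Matrix (Fin n) (Fin n) R)ˣ,
      (↑γ⁻¹ : Matrix (Fin n) (Fin n) R) * M * (↑γ : Matrix (Fin n) (Fin n) R)
        = Matrix.diagonal d := by
  have heigen (i : Fin n) : ∃ c : Fin n → R, M *ᵥ c = d i • c ∧ IsLocalRing.residue R ∘ c ≠ 0 := by
    refine exists_mulVec_eq_smul_residue_ne_zero (q := ∏ j ∈ Finset.univ.erase i, (X - C (d j)))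
      (by rw [hM, Finset.mul_prod_erase _ (fun j ↦ X - C (d j)) (Finset.mem_univ i)]) ?_
    simp only [eval_prod, eval_sub, eval_X, eval_C, IsUnit.prod_iff, Finset.mem_erase]
    exact fun j hj ↦ hd i j (Ne.symm hj.1)
  choose c hc hc0 using heigen
  obtain ⟨γ, hγ⟩ := isUnit_of_mulVec_col_eq_smul (γ := (of c)ᵀ) hd hc hc0
  refine ⟨γ, ?_⟩
  rw [mul_assoc, hγ, mul_eq_mul_diagonal_of_mulVec_col (γ := (of c)ᵀ) hc, ← hγ, Units.inv_mul_cancel_left]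
end
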